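/- arXiv:1712.00615 — 5 statements merged into one kernel-verified Lean document; each statement's English description precedes it below -/
import Mathlib

section
/- Let T be a deterministic adaptive group-testing algorithm (decision tree) on ground set [n], let w be a binary string, and let 𝓘 be a nonempty family of subsets of [n] such that s_T(I) = w for every I ∈ 𝓘. Then the union J = ⋃_{I∈𝓘} I also satisfies s_T(J) = w. -/
/-- A deterministic adaptive group-testing algorithm on ground set `[n]`,
modeled as a finite binary decision tree: internal nodes are labeled by a
query `Q ⊆ [n]` and have two children (for answers `0` and `1`);
leaves are labeled by an output in `ℕ`. -/
inductive GTTree (n : ℕ) : Type where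
  | leaf (out : ℕ) : GTTree n
  | node (q : Finset (Fin n)) (f0 f1 : GTTree n) : GTTree n

namespace GTTree

/-- The answer to a query `q` on the set `I` of defective items:
`true` iff `q ∩ I ≠ ∅`. -/
def answer {n : ℕ} (q I : Finset (Fin n)) : Bool :=
  decide (q ∩ I).Nonempty

/-- `T.output I`: the output label of the leaf reached when running `T`
on the defective set `I`. -/
def output {n : ℕ} : GTTree n → Finset (Fin n) → ℕ
  | leaf out, _ => out
  | node q f0 f1, I => if answer q I then f1.output I else f0.output I

/-- `T.queries I`: the list of queries along the root-to-leaf path followed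
when running `T` on the defective set `I`. -/
def queries {n : ℕ} : GTTree n → Finset (Fin n) → List (Finset (Fin n))
  | leaf _, _ => []
  | node q f0 f1, I => q :: (if answer q I then f1.queries I else f0.queries I)

/-- `T.answers I`: the answer string (sequence of branch bits) along the
root-to-leaf path followed when running `T` on the defective set `I`. -/
def answers {n : ℕ} : GTTree n → Finset (Fin n) → List Bool
  | leaf _, _ => []
  | node q f0 f1, I =>
      answer q I :: (if answer q I then f1.answers I else f0.answers I)

end GTTree

/-- If every member of a nonempty family `𝓘` produces the same answer string `w`,
then so does the union of the family. -/
theorem stmt3 {n : ℕ} (T : GTTree n) (w : List Bool)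
    (𝓘 : Finset (Finset (Fin n))) (h𝓘 : 𝓘.Nonempty)
    (h : ∀ I ∈ 𝓘, T.answers I = w) :
    T.answers (𝓘.sup id) = w := by
  induction T generalizing w with
  | leaf out =>
      obtain ⟨I0, hI0⟩ := h𝓘
      simpa [GTTree.answers] using (h I0 hI0).symm
  | node q f0 f1 ih0 ih1 =>
      obtain ⟨I0, hI0⟩ := h𝓘
      have hw := h I0 hI0
      set b := GTTree.answer q I0 with hb
      have hwcons : ∃ w', w = b :: w' := by
        cases w with
        | nil => simp [GTTree.answers] at hw
        | cons a w' =>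
            refine ⟨w', ?_⟩
            simp [GTTree.answers] at hw
            rw [hb, ← hw.1]
      obtain ⟨w', rfl⟩ := hwcons
      -- every I in 𝓘 answers b on q
      have hall : ∀ I ∈ 𝓘, GTTree.answer q I = b := by
        intro I hI
        have := h I hI
        simp [GTTree.answers] at this
        exact this.1
      have hJ : GTTree.answer q (𝓘.sup id) = b := by
        cases hbv : b with
        | true =>
            have : (q ∩ I0).Nonempty := by
              have := hall I0 hI0
              rw [hbv] at this
              simpa [GTTree.answer] using this
            obtain ⟨x, hx⟩ := this
            simp only [Finset.mem_inter] at hx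
            have hxJ : x ∈ 𝓘.sup id :=
              Finset.le_sup (f := id) hI0 hx.2
            simp only [GTTree.answer, decide_eq_true_eq]
            exact ⟨x, Finset.mem_inter.mpr ⟨hx.1, hxJ⟩⟩
        | false =>
            simp only [GTTree.answer, decide_eq_false_iff_not,
              Finset.not_nonempty_iff_eq_empty]
            rw [Finset.eq_empty_iff_forall_notMem]
            intro x hx
            simp only [Finset.mem_inter] at hx
            obtain ⟨I, hI, hxI⟩ := by
              have := hx.2
              simpa [Finset.mem_sup] using this
            have := hall I hI
            rw [hbv] at this
            simp only [GTTree.answer, decide_eq_false_iff_not] at this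
            exact this ⟨x, Finset.mem_inter.mpr ⟨hx.1, hxI⟩⟩
      have hrest : ∀ I ∈ 𝓘,
          (if b = true then f1.answers I else f0.answers I) = w' := by
        intro I hI
        have := h I hI
        rw [GTTree.answers, hall I hI] at this
        simpa using this
      clear_value b
      rw [GTTree.answers, hJ]
      cases b with
      | true =>
          rw [if_pos rfl]
          congr 1
          exact ih1 w' (fun I hI => by simpa using hrest I hI)
      | false =>
          rw [if_neg (by simp)]
          congr 1
          exact ih0 w' (fun I hI => by simpa using hrest I hI)
end

section
/- Let 0 < ε < 1, let n ≥ d ≥ 1 be integers, and set d' = (d+1)(1+ε)/(1−ε). Let T be a deterministic adaptive group-testing algorithm (decision tree) on ground set [n] that estimates the number of defectives up to a multiplicative factor 1±ε, i.e., for every I ⊆ [n] the output satisfies (1−ε)|I| ≤ T(I) ≤ (1+ε)|I|. Then there exists I ⊆ [n] with |I| = d such that |Q(T,I)| ≥ log₂( C(n,d) / C(⌈d'⌉−1, d) ), where C(a,b) denotes the binomial coefficient. -/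
namespace GTTree

lemma answer_union {n : ℕ} (q I J : Finset (Fin n)) :
    answer q (I ∪ J) = (answer q I || answer q J) := by
  have h : (q ∩ (I ∪ J)).Nonempty ↔ (q ∩ I).Nonempty ∨ (q ∩ J).Nonempty := by
    simp [Finset.inter_union_distrib_left, ← Finset.coe_nonempty, Set.union_nonempty]
  simp only [answer, decide_eq_decide.2 h, Bool.decide_or]

lemma answers_union {n : ℕ} (T : GTTree n) :
    ∀ I J : Finset (Fin n), T.answers I = T.answers J → T.answers (I ∪ J) = T.answers I := by
  induction T with
  | leaf out => intro I J h; rfl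
  | node q f0 f1 ih0 ih1 =>
    intro I J h
    simp only [answers, List.cons.injEq] at h ⊢
    obtain ⟨h1, h2⟩ := h
    have hu : answer q (I ∪ J) = answer q I := by
      rw [answer_union, ← h1, Bool.or_self]
    refine ⟨hu, ?_⟩
    rw [hu, ← h1] at *
    cases hb : answer q I with
    | false => simp only [hb, Bool.false_eq_true, if_false] at h2 ⊢; exact ih0 I J h2
    | true => simp only [hb, if_true] at h2 ⊢; exact ih1 I J h2

lemma output_eq_of_answers_eq {n : ℕ} (T : GTTree n) :
    ∀ I J : Finset (Fin n), T.answers I = T.answers J → T.output I = T.output J := by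
  induction T with
  | leaf out => intro I J h; rfl
  | node q f0 f1 ih0 ih1 =>
    intro I J h
    simp only [answers, List.cons.injEq] at h
    obtain ⟨h1, h2⟩ := h
    simp only [output, ← h1]
    rw [← h1] at h2
    cases hb : answer q I with
    | false => simp only [hb, Bool.false_eq_true, if_false] at h2 ⊢; exact ih0 I J h2
    | true => simp only [hb, if_true] at h2 ⊢; exact ih1 I J h2

lemma queries_length {n : ℕ} (T : GTTree n) (I : Finset (Fin n)) :
    (T.queries I).length = (T.answers I).length := by
  induction T with
  | leaf out => rfl
  | node q f0 f1 ih0 ih1 =>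
    simp only [queries, answers, List.length_cons]
    cases answer q I <;> simp [ih0, ih1]

lemma answers_eq_of_prefix {n : ℕ} (T : GTTree n) :
    ∀ I J : Finset (Fin n), T.answers I <+: T.answers J → T.answers I = T.answers J := by
  induction T with
  | leaf out => intro I J _; rfl
  | node q f0 f1 ih0 ih1 =>
    intro I J h
    simp only [answers] at h ⊢
    rw [List.cons_prefix_cons] at h
    obtain ⟨h1, h2⟩ := h
    rw [List.cons.injEq]
    refine ⟨h1, ?_⟩
    rw [← h1] at h2 ⊢
    cases hb : answer q I with
    | false => simp only [hb, Bool.false_eq_true, if_false] at h2 ⊢; exact ih0 I J h2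
    | true => simp only [hb, if_true] at h2 ⊢; exact ih1 I J h2

lemma answers_sup {n : ℕ} (T : GTTree n) (a : List Bool) :
    ∀ F : Finset (Finset (Fin n)), F.Nonempty → (∀ I ∈ F, T.answers I = a) →
      T.answers (F.sup id) = a := by
  intro F hne
  induction hne using Finset.Nonempty.cons_induction with
  | singleton I => intro h; simpa using h I (by simp)
  | cons I F hIF hne ih =>
    intro h
    have h1 : T.answers I = a := h I (Finset.mem_cons_self _ _)
    have h2 : T.answers (F.sup id) = a := ih fun J hJ => h J (Finset.mem_cons_of_mem hJ)
    rw [Finset.sup_cons]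
    have : (id I ⊔ F.sup id) = I ∪ F.sup id := rfl
    rw [this, answers_union T I (F.sup id) (h1.trans h2.symm), h1]

end GTTree

/-- Deterministic lower bound: any deterministic adaptive algorithm estimating the
number of defectives up to factor `1 ± ε` asks, on some set of size `d`, at least
`log₂ (C(n,d) / C(⌈d'⌉ - 1, d))` queries, where `d' = (d+1)(1+ε)/(1−ε)`. -/
theorem stmt4 {n d : ℕ} (ε : ℝ) (hε : 0 < ε) (hε1 : ε < 1) (hd : 1 ≤ d) (hdn : d ≤ n)
    (T : GTTree n)
    (hT : ∀ I : Finset (Fin n),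
      (1 - ε) * (I.card : ℝ) ≤ (T.output I : ℝ) ∧
        (T.output I : ℝ) ≤ (1 + ε) * (I.card : ℝ)) :
    ∃ I : Finset (Fin n), I.card = d ∧
      ((T.queries I).length : ℝ) ≥
        Real.logb 2 ((n.choose d : ℝ) /
          ((⌈((d : ℝ) + 1) * (1 + ε) / (1 - ε)⌉ - 1).toNat.choose d : ℝ)) := by
  classical
  set m : ℕ := (⌈((d : ℝ) + 1) * (1 + ε) / (1 - ε)⌉ - 1).toNat with hm
  set S : Finset (Finset (Fin n)) := Finset.powersetCard d Finset.univ with hS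
  have hmemS : ∀ I ∈ S, I.card = d := by
    intro I hI; rw [hS, Finset.mem_powersetCard] at hI; exact hI.2
  have hSne : S.Nonempty := Finset.powersetCard_nonempty.2 (by simpa using hdn)
  set L : ℕ := S.sup (fun I => (T.answers I).length) with hL
  have hlen : ∀ I ∈ S, (T.answers I).length ≤ L :=
    fun I hI => Finset.le_sup (f := fun I => (T.answers I).length) hI
  set g : Finset (Fin n) → List Bool :=
    fun I => T.answers I ++ List.replicate (L - (T.answers I).length) false with hg
  have hglen : ∀ I ∈ S, (g I).length = L := by
    intro I hI
    simp only [hg, List.length_append, List.length_replicate]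
    have := hlen I hI; omega
  have hgeq : ∀ I ∈ S, ∀ J ∈ S, g I = g J → T.answers I = T.answers J := by
    intro I hI J hJ h
    have hpI : T.answers I <+: g J := h ▸ List.prefix_append _ _
    have hpJ : T.answers J <+: g J := List.prefix_append _ _
    rcases le_total (T.answers I).length (T.answers J).length with hle | hle
    · exact T.answers_eq_of_prefix I J (List.prefix_of_prefix_length_le hpI hpJ hle)
    · exact (T.answers_eq_of_prefix J I (List.prefix_of_prefix_length_le hpJ hpI hle)).symm
  have h1ε : (0:ℝ) < 1 - ε := by linarith
  have hfiber : ∀ a ∈ S.image g, (S.filter fun I => g I = a).card ≤ m.choose d := by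
    intro a _
    set F := S.filter fun I => g I = a with hF
    rcases F.eq_empty_or_nonempty with he | hne
    · simp [he]
    obtain ⟨I₁, hI₁⟩ := hne
    have hI₁S : I₁ ∈ S := (Finset.mem_filter.1 hI₁).1
    have hall : ∀ I ∈ F, T.answers I = T.answers I₁ := by
      intro I hI
      obtain ⟨hIS, hIa⟩ := Finset.mem_filter.1 hI
      exact hgeq I hIS I₁ hI₁S (hIa.trans (Finset.mem_filter.1 hI₁).2.symm)
    set U := F.sup id with hU
    have hUa : T.answers U = T.answers I₁ := T.answers_sup _ F ⟨I₁, hI₁⟩ hall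
    have hout : (T.output U : ℝ) = (T.output I₁ : ℝ) := by
      rw [T.output_eq_of_answers_eq U I₁ hUa]
    have hUb : (1 - ε) * (U.card : ℝ) ≤ (1 + ε) * d := by
      have h1 := (hT U).1
      have h2 := (hT I₁).2
      rw [hout] at h1
      rw [hmemS I₁ hI₁S] at h2
      linarith
    have hUm : U.card ≤ m := by
      have hltR : (U.card : ℝ) < ((d : ℝ) + 1) * (1 + ε) / (1 - ε) := by
        rw [lt_div_iff₀ h1ε]
        nlinarith [hUb]
      have hceil := Int.le_ceil (((d : ℝ) + 1) * (1 + ε) / (1 - ε))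
      have hlt : (U.card : ℤ) < ⌈((d : ℝ) + 1) * (1 + ε) / (1 - ε)⌉ := by
        exact_mod_cast hltR.trans_le hceil
      omega
    have hsub : F ⊆ U.powersetCard d := by
      intro I hI
      rw [Finset.mem_powersetCard]
      exact ⟨Finset.le_sup (f := id) hI, hmemS I (Finset.mem_filter.1 hI).1⟩
    calc F.card ≤ (U.powersetCard d).card := Finset.card_le_card hsub
      _ = U.card.choose d := Finset.card_powersetCard _ _
      _ ≤ m.choose d := Nat.choose_le_choose d hUm
  have himg : (S.image g).card ≤ 2 ^ L := by
    have hmaps : ∀ l ∈ S.image g,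
        (fun i : Fin L => l.getD i false) ∈ (Finset.univ : Finset (Fin L → Bool)) :=
      fun _ _ => Finset.mem_univ _
    have hinj : Set.InjOn (fun l : List Bool => (fun i : Fin L => l.getD i false))
        (S.image g : Set (List Bool)) := by
      intro l1 h1 l2 h2 h
      simp only [Finset.coe_image, Set.mem_image, Finset.mem_coe] at h1 h2
      obtain ⟨I1, hI1, rfl⟩ := h1
      obtain ⟨I2, hI2, rfl⟩ := h2
      apply List.ext_getElem (by rw [hglen I1 hI1, hglen I2 hI2])
      intro i hi1 hi2
      have hiL : i < L := by rw [hglen I1 hI1] at hi1; exact hi1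
      have hh := congrFun h ⟨i, hiL⟩
      simpa [List.getD_eq_getElem?_getD, List.getElem?_eq_getElem, hi1, hi2] using hh
    calc (S.image g).card ≤ (Finset.univ : Finset (Fin L → Bool)).card :=
          Finset.card_le_card_of_injOn _ hmaps hinj
      _ = 2 ^ L := by simp
  have hcount : n.choose d ≤ m.choose d * 2 ^ L := by
    calc n.choose d = S.card := by
          rw [hS, Finset.card_powersetCard, Finset.card_univ, Fintype.card_fin]
      _ ≤ m.choose d * (S.image g).card :=
          Finset.card_le_mul_card_image (f := g) S (m.choose d) hfiber
      _ ≤ m.choose d * 2 ^ L := Nat.mul_le_mul_left _ himg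
  have hnd : 0 < n.choose d := Nat.choose_pos hdn
  have hmd : 0 < m.choose d := by
    rcases Nat.eq_zero_or_pos (m.choose d) with h | h
    · rw [h] at hcount; omega
    · exact h
  obtain ⟨I₀, hI₀S, hI₀L⟩ :=
    Finset.exists_mem_eq_sup S hSne (fun I => (T.answers I).length)
  refine ⟨I₀, hmemS I₀ hI₀S, ?_⟩
  have hqL : ((T.queries I₀).length : ℝ) = (L : ℝ) := by
    rw [T.queries_length I₀, hL, hI₀L]
  rw [ge_iff_le, hqL]
  have hx : (0:ℝ) < (n.choose d : ℝ) / (m.choose d : ℝ) :=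
    div_pos (by exact_mod_cast hnd) (by exact_mod_cast hmd)
  rw [Real.logb_le_iff_le_rpow (by norm_num) hx, Real.rpow_natCast,
    div_le_iff₀ (by exact_mod_cast hmd)]
  have : (n.choose d : ℝ) ≤ (m.choose d : ℝ) * (2:ℝ) ^ L := by exact_mod_cast hcount
  linarith
end

section
/- Let d ≥ 2 and n ≥ d be integers and 0 ≤ δ < 1. Let μ be a finitely supported probability distribution over deterministic adaptive group-testing algorithms (decision trees) on ground set [n] such that for every I ⊆ [n], Pr_{T∼μ}[ (3/4)|I| ≤ T(I) ≤ (5/4)|I| ] ≥ 1 − δ (i.e., μ estimates the number of defectives up to a multiplicative factor 1/4 with probability at least 1 − δ). Then there exist a tree T₀ in the support of μ and an integer j with 0 ≤ j ≤ ⌊log₂ d⌋ such that |Q(T₀, [2^j])| ≥ log₂( (1−δ)·(⌊log₂ d⌋ + 1) ). In particular, if 1 − δ > 1/2 the worst-case number of queries of μ is at least log₂ log₂ d − 1. -/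
open scoped Classical

lemma my_card_filter_lt (n m : ℕ) (h : m ≤ n) :
    (Finset.univ.filter fun x : Fin n => (x : ℕ) < m).card = m := by
  have heq : (Finset.univ.filter fun x : Fin n => (x : ℕ) < m) =
      Finset.image (Fin.castLE h) Finset.univ := by
    ext x
    simp only [Finset.mem_filter, Finset.mem_univ, true_and, Finset.mem_image]
    constructor
    · intro hx; exact ⟨⟨(x : ℕ), hx⟩, Fin.ext rfl⟩
    · rintro ⟨y, rfl⟩; exact y.2
  rw [heq, Finset.card_image_of_injective _ (Fin.castLE_injective h),
    Finset.card_univ, Fintype.card_fin]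

lemma my_tree_card {n : ℕ} (T : GTTree n) :
    ∀ (q : ℕ) (J : Finset ℕ) (inp : ℕ → Finset (Fin n)),
    (∀ j ∈ J, ((T.queries (inp j)).length ≤ q)) →
    Set.InjOn (fun j => T.output (inp j)) J → J.card ≤ 2 ^ q := by
  induction T with
  | leaf out =>
    intro q J inp _ hinj
    have h1 : J.card ≤ 1 := Finset.card_le_one.mpr (fun a ha b hb => hinj ha hb rfl)
    exact h1.trans Nat.one_le_two_pow
  | node qq f0 f1 ih0 ih1 =>
    intro q J inp hq hinj
    cases q with
    | zero =>
      rcases Finset.eq_empty_or_nonempty J with h | ⟨j, hj⟩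
      · simp [h]
      · have := hq j hj
        simp [GTTree.queries] at this
    | succ q =>
      have hsplit := Finset.card_filter_add_card_filter_not
        (s := J) (p := fun j => GTTree.answer qq (inp j) = true)
      set J1 := J.filter (fun j => GTTree.answer qq (inp j) = true) with hJ1
      set J0 := J.filter (fun j => ¬ GTTree.answer qq (inp j) = true) with hJ0
      have h1 : J1.card ≤ 2 ^ q := by
        refine ih1 q J1 inp ?_ ?_
        · intro j hj
          rw [Finset.mem_filter] at hj
          have := hq j hj.1
          simp only [GTTree.queries, if_pos hj.2, List.length_cons] at this
          omega
        · intro a ha b hb hab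
          rw [hJ1, Finset.coe_filter] at ha hb
          refine hinj ha.1 hb.1 ?_
          simp only [GTTree.output, if_pos ha.2, if_pos hb.2]
          exact hab
      have h0 : J0.card ≤ 2 ^ q := by
        refine ih0 q J0 inp ?_ ?_
        · intro j hj
          rw [Finset.mem_filter] at hj
          have := hq j hj.1
          simp only [GTTree.queries, if_neg hj.2, List.length_cons] at this
          omega
        · intro a ha b hb hab
          rw [hJ0, Finset.coe_filter] at ha hb
          refine hinj ha.1 hb.1 ?_
          simp only [GTTree.output, if_neg ha.2, if_neg hb.2]
          exact hab
      calc J.card = J1.card + J0.card := hsplit.symm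
        _ ≤ 2 ^ q + 2 ^ q := Nat.add_le_add h1 h0
        _ = 2 ^ (q + 1) := by ring

/-- Lower bound `log₂ log₂ d − 1` for Monte Carlo estimation up to factor `1/4`:
if every `I` is estimated within `[3|I|/4, 5|I|/4]` with probability `≥ 1 − δ`, then
some tree in the support asks at least `log₂((1−δ)(⌊log₂ d⌋ + 1))` queries on some
set `[2^j]` with `0 ≤ j ≤ ⌊log₂ d⌋`; in particular, if `1 − δ > 1/2`, the worst-case
number of queries is at least `log₂ log₂ d − 1`. -/
theorem stmt7 {n d : ℕ} (hd : 2 ≤ d) (hdn : d ≤ n)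
    (δ : ℝ) (hδ : 0 ≤ δ) (hδ1 : δ < 1)
    {Ω : Type} [Fintype Ω] (p : Ω → ℝ) (hp : ∀ ω, 0 ≤ p ω) (hp1 : ∑ ω, p ω = 1)
    (Alg : Ω → GTTree n)
    (hcorrect : ∀ I : Finset (Fin n),
      1 - δ ≤ ∑ ω ∈ Finset.univ.filter (fun ω =>
        (3 / 4 : ℝ) * (I.card : ℝ) ≤ ((Alg ω).output I : ℝ) ∧
          ((Alg ω).output I : ℝ) ≤ (5 / 4 : ℝ) * (I.card : ℝ)), p ω) :
    (∃ ω, 0 < p ω ∧ ∃ j ≤ Nat.log 2 d,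
      (((Alg ω).queries (Finset.univ.filter fun x : Fin n => (x : ℕ) < 2 ^ j)).length : ℝ) ≥
        Real.logb 2 ((1 - δ) * ((Nat.log 2 d : ℝ) + 1))) ∧
    ((1 : ℝ) / 2 < 1 - δ → ∃ ω, 0 < p ω ∧ ∃ I : Finset (Fin n),
      (((Alg ω).queries I).length : ℝ) ≥ Real.logb 2 (Real.logb 2 (d : ℝ)) - 1) := by
  set L := Nat.log 2 d with hL
  set Iset : ℕ → Finset (Fin n) := fun j => Finset.univ.filter fun x : Fin n => (x : ℕ) < 2 ^ j
    with hIset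
  have hcardI : ∀ j ≤ L, (Iset j).card = 2 ^ j := by
    intro j hj
    refine my_card_filter_lt n (2 ^ j) ?_
    calc 2 ^ j ≤ 2 ^ L := Nat.pow_le_pow_right (by norm_num) hj
      _ ≤ d := Nat.pow_log_le_self 2 (by omega)
      _ ≤ n := hdn
  set good : Ω → ℕ → Prop := fun ω j =>
      (3 / 4 : ℝ) * ((Iset j).card : ℝ) ≤ ((Alg ω).output (Iset j) : ℝ) ∧
        ((Alg ω).output (Iset j) : ℝ) ≤ (5 / 4 : ℝ) * ((Iset j).card : ℝ) with hgood
  set N : Ω → ℕ := fun ω => ((Finset.range (L + 1)).filter (good ω)).card with hN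
  set c : ℝ := (1 - δ) * ((L : ℝ) + 1) with hc
  have hcpos : 0 < c := by
    apply mul_pos (by linarith)
    positivity
  -- averaging
  have key : c ≤ ∑ ω, p ω * (N ω : ℝ) := by
    have step1 : c = ∑ _j ∈ Finset.range (L + 1), (1 - δ) := by
      rw [Finset.sum_const, Finset.card_range, nsmul_eq_mul]
      push_cast [hc]; ring
    rw [step1]
    calc ∑ _j ∈ Finset.range (L + 1), (1 - δ)
        ≤ ∑ j ∈ Finset.range (L + 1), ∑ ω ∈ Finset.univ.filter (good · j), p ω := by
          exact Finset.sum_le_sum fun j _ => hcorrect (Iset j)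
      _ = ∑ j ∈ Finset.range (L + 1), ∑ ω, if good ω j then p ω else 0 := by
          refine Finset.sum_congr rfl fun j _ => ?_
          rw [Finset.sum_filter]
      _ = ∑ ω, ∑ j ∈ Finset.range (L + 1), if good ω j then p ω else 0 :=
          Finset.sum_comm
      _ = ∑ ω, p ω * (N ω : ℝ) := by
          refine Finset.sum_congr rfl fun ω _ => ?_
          rw [← Finset.sum_filter, Finset.sum_const, nsmul_eq_mul, mul_comm]
  -- find a heavy tree
  have hex : ∃ ω, 0 < p ω ∧ c ≤ (N ω : ℝ) := by
    by_contra h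
    push_neg at h
    obtain ⟨ω₀, -, hω₀⟩ : ∃ a ∈ Finset.univ, p a ≠ 0 :=
      Finset.exists_ne_zero_of_sum_ne_zero (by rw [hp1]; norm_num)
    have hω₀pos : 0 < p ω₀ := lt_of_le_of_ne (hp ω₀) (Ne.symm hω₀)
    have hlt : ∑ ω, p ω * (N ω : ℝ) < ∑ ω, p ω * c := by
      refine Finset.sum_lt_sum (fun ω _ => ?_) ⟨ω₀, Finset.mem_univ _, ?_⟩
      · rcases eq_or_lt_of_le (hp ω) with h0 | hpos
        · rw [← h0]; simp
        · exact mul_le_mul_of_nonneg_left (le_of_lt (h ω hpos)) (hp ω)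
      · exact mul_lt_mul_of_pos_left (h ω₀ hω₀pos) hω₀pos
    rw [← Finset.sum_mul, hp1, one_mul] at hlt
    linarith
  obtain ⟨ω, hpω, hNω⟩ := hex
  -- outputs are injective on the good set
  set J : Finset ℕ := (Finset.range (L + 1)).filter (good ω) with hJ
  have hJL : ∀ j ∈ J, j ≤ L := by
    intro j hj
    rw [hJ, Finset.mem_filter, Finset.mem_range] at hj
    omega
  have hinj : Set.InjOn (fun j => (Alg ω).output (Iset j)) J := by
    have hkey : ∀ a ∈ J, ∀ b ∈ J, a < b →
        ((Alg ω).output (Iset a) : ℝ) ≠ ((Alg ω).output (Iset b) : ℝ) := by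
      intro a ha b hb hab
      have hga : good ω a := (Finset.mem_filter.mp ha).2
      have hgb : good ω b := (Finset.mem_filter.mp hb).2
      have hca := hcardI a (hJL a ha)
      have hcb := hcardI b (hJL b hb)
      have h2a : (0:ℝ) < (2:ℝ) ^ a := by positivity
      have hpow : (2:ℝ) * (2:ℝ) ^ a ≤ (2:ℝ) ^ b := by
        have : (2:ℝ) ^ (a + 1) ≤ (2:ℝ) ^ b :=
          pow_le_pow_right₀ (by norm_num) (by omega)
        calc (2:ℝ) * 2 ^ a = 2 ^ (a + 1) := by ring
          _ ≤ 2 ^ b := this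
      intro heq
      have h1 : ((Alg ω).output (Iset a) : ℝ) ≤ (5/4) * (2:ℝ) ^ a := by
        have := hga.2; rw [hca] at this; push_cast at this ⊢; linarith
      have h2 : (3/4) * (2:ℝ) ^ b ≤ ((Alg ω).output (Iset b) : ℝ) := by
        have := hgb.1; rw [hcb] at this; push_cast at this ⊢; linarith
      nlinarith
    intro a ha b hb hab
    simp only at hab
    by_contra hne
    rcases lt_or_gt_of_ne hne with h | h
    · exact hkey a ha b hb h (by exact_mod_cast congrArg (fun x : ℕ => (x:ℝ)) hab)
    · exact hkey b hb a ha h (by exact_mod_cast congrArg (fun x : ℕ => (x:ℝ)) hab.symm)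
  -- take the max query length over J
  have hNJ : c ≤ (J.card : ℝ) := hNω
  have hJne : J.Nonempty := by
    refine Finset.card_pos.mp ?_
    have : (0:ℝ) < (J.card : ℝ) := lt_of_lt_of_le hcpos hNJ
    exact_mod_cast this
  obtain ⟨j, hjJ, hjmax⟩ := Finset.exists_max_image J
    (fun j => ((Alg ω).queries (Iset j)).length) hJne
  set q : ℕ := ((Alg ω).queries (Iset j)).length with hq
  have hcard : J.card ≤ 2 ^ q :=
    my_tree_card (Alg ω) q J Iset (fun k hk => hjmax k hk) hinj
  have hclog : Real.logb 2 c ≤ (q : ℝ) := by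
    rw [Real.logb_le_iff_le_rpow (by norm_num) hcpos]
    rw [Real.rpow_natCast]
    calc c ≤ (J.card : ℝ) := hNJ
      _ ≤ ((2 ^ q : ℕ) : ℝ) := by exact_mod_cast hcard
      _ = (2:ℝ) ^ q := by push_cast; ring
  have part1 : ∃ ω, 0 < p ω ∧ ∃ j ≤ L,
      (((Alg ω).queries (Iset j)).length : ℝ) ≥ Real.logb 2 ((1 - δ) * ((L : ℝ) + 1)) :=
    ⟨ω, hpω, j, hJL j hjJ, hclog⟩
  constructor
  · exact part1
  · intro hhalf
    obtain ⟨ω', hpω', j', hj', hq'⟩ := part1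
    refine ⟨ω', hpω', Iset j', ?_⟩
    have hd2 : (2:ℝ) ≤ (d:ℝ) := by exact_mod_cast hd
    have hlogd1 : 1 ≤ Real.logb 2 (d:ℝ) := by
      rw [← Real.logb_self_eq_one (b := 2) (by norm_num)]
      rw [Real.logb_le_logb (by norm_num) (by norm_num) (by linarith)]
      exact hd2
    have hdlt : (d:ℝ) < (2:ℝ) ^ ((L:ℝ) + 1) := by
      have := Nat.lt_pow_succ_log_self (b := 2) (by norm_num) d
      rw [← hL] at this
      have h2 : (d:ℝ) < ((2 ^ (L + 1) : ℕ) : ℝ) := by exact_mod_cast this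
      calc (d:ℝ) < ((2 ^ (L + 1) : ℕ) : ℝ) := h2
        _ = (2:ℝ) ^ ((L:ℝ) + 1) := by
          push_cast
          rw [← Real.rpow_natCast 2 (L + 1)]
          push_cast; ring_nf
    have hlogd_le : Real.logb 2 (d:ℝ) ≤ (L:ℝ) + 1 := by
      rw [Real.logb_le_iff_le_rpow (by norm_num) (by linarith)]
      exact hdlt.le
    have hmono : Real.logb 2 (Real.logb 2 (d:ℝ)) ≤ Real.logb 2 ((L:ℝ) + 1) := by
      rw [Real.logb_le_logb (by norm_num) (by linarith) (by positivity)]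
      exact hlogd_le
    have hL2c : (L:ℝ) + 1 ≤ 2 * c := by
      rw [hc]; nlinarith
    have hmono2 : Real.logb 2 ((L:ℝ) + 1) ≤ Real.logb 2 (2 * c) := by
      rw [Real.logb_le_logb (by norm_num) (by positivity) (by positivity)]
      exact hL2c
    have hsplit : Real.logb 2 (2 * c) = 1 + Real.logb 2 c := by
      rw [Real.logb_mul (by norm_num) (ne_of_gt hcpos), Real.logb_self_eq_one (by norm_num)]
    have : Real.logb 2 (Real.logb 2 (d:ℝ)) - 1 ≤ Real.logb 2 c := by
      have := hmono.trans (hmono2.trans_eq hsplit)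
      linarith
    calc Real.logb 2 (Real.logb 2 (d:ℝ)) - 1 ≤ Real.logb 2 c := this
      _ ≤ (((Alg ω').queries (Iset j')).length : ℝ) := hq'
end

section
/- Let 0 < δ ≤ 1 and let d > 0 be a real number. Let (Δ_i)_{i≥1} be a sequence of real numbers with Δ₁ ≥ 1 and Δ_{i+1} ≥ 2·Δ_i for all i ≥ 1. Then ∑_{i : Δ_i < d/(2·log₂(2/δ))} 2^{−d/Δ_i} ≤ δ/2, where the sum ranges over the (finitely many) indices i ≥ 1 with Δ_i < d/(2·log₂(2/δ)). -/
/-!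
Write `L = log₂ (2/δ) ≥ 1`, so that `2^(-L) = δ/2`. Since `Δ` at least doubles, only finitely
many indices satisfy `Δ_i < d/(2L)`; let `m` be the largest. For `i ≤ m`,
`d/Δ_i ≥ 2^(m-i) · d/Δ_m > 2^(m-i+1) L ≥ L + (m-i+1)`, so the `i`-th term is at most
`(δ/2) · 2^(-(m-i+1))`, and these bounds form a geometric series with sum `δ/2`.
-/

section Doubling

variable {Δ : ℕ → ℝ} (hΔ : ∀ i, 1 ≤ i → 2 * Δ i ≤ Δ (i + 1))
include hΔ

theorem two_pow_mul_le_of_doubling {i : ℕ} (hi : 1 ≤ i) (k : ℕ) : 2 ^ k * Δ i ≤ Δ (i + k) := by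
  induction k with
  | zero => simp
  | succ k ih =>
    calc 2 ^ (k + 1) * Δ i = 2 * (2 ^ k * Δ i) := by ring
      _ ≤ 2 * Δ (i + k) := by gcongr
      _ ≤ Δ (i + k + 1) := hΔ _ (by omega)

theorem two_pow_pred_mul_le_of_doubling {i : ℕ} (hi : 1 ≤ i) : 2 ^ (i - 1) * Δ 1 ≤ Δ i := by
  simpa [Nat.add_sub_cancel' hi] using two_pow_mul_le_of_doubling hΔ le_rfl (i - 1)

theorem pos_of_doubling (hΔ1 : 0 < Δ 1) {i : ℕ} (hi : 1 ≤ i) : 0 < Δ i :=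
  (mul_pos (by positivity) hΔ1).trans_le (two_pow_pred_mul_le_of_doubling hΔ hi)

theorem finite_setOf_lt_of_doubling (hΔ1 : 0 < Δ 1) (T : ℝ) :
    {i | 1 ≤ i ∧ Δ i < T}.Finite := by
  obtain ⟨N, hN⟩ := pow_unbounded_of_one_lt (T / Δ 1) one_lt_two
  refine (Set.finite_Iic N).subset fun i ⟨hi, hiT⟩ => Set.mem_Iic.2 ?_
  by_contra! hNi
  have : (2 : ℝ) ^ N ≤ 2 ^ (i - 1) := pow_le_pow_right₀ one_le_two (by omega)
  rw [div_lt_iff₀ hΔ1] at hN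
  nlinarith [two_pow_pred_mul_le_of_doubling hΔ hi]

end Doubling

theorem one_le_logb_two_div {δ : ℝ} (hδ : 0 < δ) (hδ1 : δ ≤ 1) : 1 ≤ Real.logb 2 (2 / δ) := by
  rw [Real.le_logb_iff_rpow_le one_lt_two (by positivity), Real.rpow_one, le_div_iff₀ hδ]
  linarith

theorem two_rpow_neg_logb_two_div {δ : ℝ} (hδ : 0 < δ) : (2 : ℝ) ^ (-Real.logb 2 (2 / δ)) = δ / 2 := by
  rw [Real.rpow_neg zero_le_two, Real.rpow_logb two_pos (by norm_num) (by positivity), inv_div]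

theorem add_succ_le_two_pow_succ_mul {L : ℝ} (hL : 1 ≤ L) (n : ℕ) : L + (n + 1) ≤ 2 ^ (n + 1) * L := by
  have hn : (n : ℝ) + 2 ≤ 2 ^ (n + 1) := by
    exact_mod_cast (Nat.lt_two_pow_self (n := n + 1))
  nlinarith

theorem two_rpow_neg_div_le {L a b d : ℝ} {n : ℕ} (hL : 1 ≤ L) (ha : 0 < a)
    (hab : 2 ^ n * a ≤ b) (hb : 2 * L * b < d) :
    (2 : ℝ) ^ (-(d / a)) ≤ 2 ^ (-L) / 2 / 2 ^ n := by
  have hexp : L + (n + 1) ≤ d / a := by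
    rw [le_div_iff₀ ha]
    calc (L + (n + 1)) * a ≤ 2 ^ (n + 1) * L * a :=
          mul_le_mul_of_nonneg_right (add_succ_le_two_pow_succ_mul hL n) ha.le
      _ = 2 * L * (2 ^ n * a) := by ring
      _ ≤ 2 * L * b := by gcongr
      _ ≤ d := hb.le
  calc (2 : ℝ) ^ (-(d / a)) ≤ 2 ^ (-(L + (n + 1))) :=
        Real.rpow_le_rpow_of_exponent_le one_le_two (by linarith)
    _ = 2 ^ (-L) / 2 / 2 ^ n := by
        rw [neg_add, Real.rpow_add two_pos, Real.rpow_neg zero_le_two ((n : ℝ) + 1),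
          show (n : ℝ) + 1 = ((n + 1 : ℕ) : ℝ) by push_cast; ring, Real.rpow_natCast, pow_succ]
        field_simp

theorem tsum_le_of_le_div_two_pow {ι : Type*} {f : ι → ℝ} (hf : Summable f) {c : ℝ} (hc : 0 ≤ c)
    (e : ι → ℕ) (he : Function.Injective e) (hfe : ∀ i, f i ≤ c / 2 / 2 ^ e i) : ∑' i, f i ≤ c :=
  (hf.tsum_le_tsum_of_inj e he (fun _ _ => by positivity) hfe (summable_geometric_two' c)).trans_eq
    (tsum_geometric_two' c)

theorem stmt12_general (δ : ℝ) (hδ : 0 < δ) (hδ1 : δ ≤ 1) (d : ℝ)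
    (Δ : ℕ → ℝ) (hΔ1 : 1 ≤ Δ 1) (hΔ : ∀ i, 1 ≤ i → 2 * Δ i ≤ Δ (i + 1)) :
    ∑' i : {i : ℕ // 1 ≤ i ∧ Δ i < d / (2 * Real.logb 2 (2 / δ))},
        (2 : ℝ) ^ (-(d / Δ (i : ℕ))) ≤ δ / 2 := by
  set L := Real.logb 2 (2 / δ)
  have hL : 1 ≤ L := one_le_logb_two_div hδ hδ1
  have hΔpos : 0 < Δ 1 := one_pos.trans_le hΔ1
  have hfin := finite_setOf_lt_of_doubling hΔ hΔpos (d / (2 * L))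
  have : Finite {i : ℕ // 1 ≤ i ∧ Δ i < d / (2 * L)} := hfin.to_subtype
  rcases isEmpty_or_nonempty {i : ℕ // 1 ≤ i ∧ Δ i < d / (2 * L)} with hs | ⟨⟨i₀, hi₀⟩⟩
  · rw [tsum_empty]
    positivity
  obtain ⟨m, ⟨-, hmT⟩, hmax⟩ := Set.exists_max_image _ id hfin ⟨i₀, hi₀⟩
  replace hmax : ∀ i : {i : ℕ // 1 ≤ i ∧ Δ i < d / (2 * L)}, (i : ℕ) ≤ m := fun i => hmax i i.2
  rw [lt_div_iff₀ (by positivity), mul_comm] at hmT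
  rw [← two_rpow_neg_logb_two_div hδ]
  refine tsum_le_of_le_div_two_pow Summable.of_finite (by positivity) (fun i => m - i)
    (fun i j hij => Subtype.ext (by have := hmax i; have := hmax j; dsimp only at hij; omega))
    fun i => two_rpow_neg_div_le hL (pos_of_doubling hΔ hΔpos i.2.1) ?_ hmT
  have := two_pow_mul_le_of_doubling hΔ i.2.1 (m - i)
  rwa [Nat.add_sub_cancel' (hmax i)] at this

/-- If `Δ₁ ≥ 1` and `Δ_{i+1} ≥ 2Δ_i` for all `i ≥ 1`, then
`∑_{i ≥ 1 : Δ_i < d/(2 log₂(2/δ))} 2^{−d/Δ_i} ≤ δ/2`. -/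
theorem stmt12 (δ : ℝ) (hδ : 0 < δ) (hδ1 : δ ≤ 1) (d : ℝ) (hd : 0 < d)
    (Δ : ℕ → ℝ) (hΔ1 : 1 ≤ Δ 1) (hΔ : ∀ i, 1 ≤ i → 2 * Δ i ≤ Δ (i + 1)) :
    ∑' i : {i : ℕ // 1 ≤ i ∧ Δ i < d / (2 * Real.logb 2 (2 / δ))},
        (2 : ℝ) ^ (-(d / Δ (i : ℕ))) ≤ δ / 2 :=
  stmt12_general δ hδ hδ1 d Δ hΔ1 hΔ
end

section
/- Let 0 < δ < 1 and let d ≥ 1, n ≥ d be integers. Let (Δ_i)_{i≥1} be a sequence of real numbers with Δ₁ ≥ 1 and Δ_{i+1} ≥ 2·Δ_i for all i ≥ 1. Let (Q_i)_{i≥1} be independent random subsets of [n], where Q_i includes each element of [n] independently with probability 1 − 2^{−1/Δ_i}. Fix I ⊆ [n] with |I| = d, let i₀ be the least index i with Q_i ∩ I = ∅ (which is almost surely finite), and set D = 2·Δ_{i₀}·log₂(2/δ). Let i₁ be the least index with Δ_{i₁} > 2d/δ. Then: (i) Pr[ d ≤ D ≤ 2·Δ_{i₁}·log₂(2/δ)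 ] ≥ 1 − δ, and (ii) the expected stopping index satisfies E[i₀] ≤ i₁ + 2. -/
/-!
With `q_i = 2^{-1/Δ_i}` one has `Pr[Q_i ∩ I = ∅] = q_i^d = 2^{-d/Δ_i}` and
`Pr[Q_i ∩ I ≠ ∅] = 1 - 2^{-d/Δ_i} ≤ d/Δ_i`.

Put `L = log₂(2/δ)`. The window `d ≤ 2Δ_{i₀}L ≤ 2Δ_{i₁}L` can only fail if `Q_{i₁}` meets `I`
(probability `≤ d/Δ_{i₁} < δ/2`), or if `i₀ ≤ k`, where `k ≤ i₁` is the last index with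
`2Δ_k L < d`. Since `Δ` at least doubles, `y_i = 2^{-d/Δ_i}` satisfies `y_i ≤ y_{i+1}²`, so the
union bound over `i ≤ k` is at most `2 y_k ≤ 2 (δ/2)² ≤ δ/2`.

Every `Q_i` with `i ≥ i₁` meets `I` with probability at most `1/2`, so by independence
`Pr[i₀ > i₁ + m] ≤ 2^{-m}`, and summing this tail gives `E[i₀] ≤ i₁ + 2`.
-/

open MeasureTheory ProbabilityTheory Finset
open scoped ENNReal

theorem one_sub_two_rpow_neg_le {x : ℝ} (hx : 0 ≤ x) : 1 - (2 : ℝ) ^ (-x) ≤ x := by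
  have htwo : (2 : ℝ) ≤ Real.exp 1 := by linarith [Real.add_one_le_exp 1]
  have hexp : Real.exp (-x) ≤ (2 : ℝ) ^ (-x) := by
    rw [← Real.exp_one_rpow, Real.rpow_neg (Real.exp_pos 1).le, Real.rpow_neg zero_le_two,
      ← Real.inv_rpow (Real.exp_pos 1).le, ← Real.inv_rpow zero_le_two]
    exact Real.rpow_le_rpow (by positivity) (inv_anti₀ two_pos htwo) hx
  linarith [Real.add_one_le_exp (-x)]

theorem two_rpow_neg_one_div_le_one {Δ : ℝ} (hΔ : 0 < Δ) : (2 : ℝ) ^ (-(1 / Δ)) ≤ 1 :=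
  Real.rpow_le_one_of_one_le_of_nonpos one_le_two (neg_nonpos.2 (by positivity))

theorem two_rpow_neg_one_div_pow (Δ : ℝ) (k : ℕ) :
    ((2 : ℝ) ^ (-(1 / Δ))) ^ k = (2 : ℝ) ^ (-(k / Δ)) := by
  rw [← Real.rpow_mul_natCast zero_le_two]
  ring_nf

theorem two_rpow_neg_div_le_sq {d Δ Δ' : ℝ} (hd : 0 ≤ d) (hΔ : 0 < Δ) (hΔΔ' : 2 * Δ ≤ Δ') :
    (2 : ℝ) ^ (-(d / Δ)) ≤ ((2 : ℝ) ^ (-(d / Δ'))) ^ 2 := by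
  rw [← Real.rpow_mul_natCast zero_le_two]
  refine Real.rpow_le_rpow_of_exponent_le one_le_two ?_
  have : d / Δ' * 2 ≤ d / Δ := by
    rw [div_mul_eq_mul_div, div_le_div_iff₀ (by linarith) hΔ]; nlinarith
  push_cast; linarith

theorem two_rpow_neg_div_le_sq_of_lt {d Δ δ : ℝ} (hδ : 0 < δ) (hΔ : 0 < Δ)
    (h : 2 * Δ * Real.logb 2 (2 / δ) < d) : (2 : ℝ) ^ (-(d / Δ)) ≤ (δ / 2) ^ 2 := by
  set L := Real.logb 2 (2 / δ)
  have h2L : (2 : ℝ) ^ (-L * (2 : ℕ)) = (δ / 2) ^ 2 := by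
    rw [Real.rpow_mul_natCast zero_le_two, Real.rpow_neg zero_le_two,
      Real.rpow_logb two_pos (by norm_num) (by positivity), inv_div]
  rw [← h2L]
  refine Real.rpow_le_rpow_of_exponent_le one_le_two ?_
  have : 2 * L ≤ d / Δ := by rw [le_div_iff₀ hΔ]; linarith
  push_cast; linarith

theorem sum_Icc_le_two_mul_of_le_sq {y : ℕ → ℝ} {a k : ℕ} (hy : ∀ i, 0 ≤ y i)
    (hsq : ∀ i, a ≤ i → y i ≤ y (i + 1) ^ 2) (hak : a ≤ k) (hk : y k ≤ 1 / 4) :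
    ∑ i ∈ Icc a k, y i ≤ 2 * y k := by
  induction k, hak using Nat.le_induction with
  | base => simp only [Icc_self, sum_singleton]; linarith [hy a]
  | succ k hak ih =>
    have hyk := hsq k hak
    have hk0 := hy (k + 1)
    rw [sum_Icc_succ_top (by omega)]
    nlinarith [ih (by nlinarith)]

theorem one_le_of_two_mul_le_succ {Δ : ℕ → ℝ} (hΔ1 : 1 ≤ Δ 1)
    (hΔ : ∀ i, 1 ≤ i → 2 * Δ i ≤ Δ (i + 1)) {i : ℕ} (hi : 1 ≤ i) : 1 ≤ Δ i := by
  induction i, hi using Nat.le_induction with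
  | base => exact hΔ1
  | succ i hi ih => linarith [hΔ i hi]

theorem monotoneOn_of_two_mul_le_succ {Δ : ℕ → ℝ} (hΔ1 : 1 ≤ Δ 1)
    (hΔ : ∀ i, 1 ≤ i → 2 * Δ i ≤ Δ (i + 1)) : MonotoneOn Δ (Set.Ici 1) :=
  monotoneOn_of_le_succ Set.ordConnected_Ici fun i _ hi _ => by
    have := one_le_of_two_mul_le_succ hΔ1 hΔ hi
    have := hΔ i hi
    rw [Order.succ_eq_add_one]; linarith

theorem sum_Icc_two_rpow_neg_div_le {Δ : ℕ → ℝ} (hΔpos : ∀ i, 1 ≤ i → 0 < Δ i)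
    (hΔ : ∀ i, 1 ≤ i → 2 * Δ i ≤ Δ (i + 1)) {d δ : ℝ} (hd : 0 ≤ d) (hδ : 0 < δ) (hδ1 : δ ≤ 1)
    {k : ℕ} (hk : 1 ≤ k) (hkd : 2 * Δ k * Real.logb 2 (2 / δ) < d) :
    ∑ i ∈ Icc 1 k, (2 : ℝ) ^ (-(d / Δ i)) ≤ δ / 2 := by
  have hyk := two_rpow_neg_div_le_sq_of_lt hδ (hΔpos k hk) hkd
  calc ∑ i ∈ Icc 1 k, (2 : ℝ) ^ (-(d / Δ i)) ≤ 2 * (2 : ℝ) ^ (-(d / Δ k)) :=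
        sum_Icc_le_two_mul_of_le_sq (fun i => by positivity)
          (fun i hi => two_rpow_neg_div_le_sq hd (hΔpos i hi) (hΔ i hi)) hk (by nlinarith)
    _ ≤ δ / 2 := by nlinarith

theorem Fintype.sum_prod_ite_mem {ι R : Type*} [Fintype ι] [DecidableEq ι] [CommSemiring R]
    (f g : ι → R) :
    ∑ s : Finset ι, ∏ j, (if j ∈ s then f j else g j) = ∏ j, (f j + g j) := by
  rw [Fintype.prod_add]
  refine Fintype.sum_congr _ _ fun s => ?_
  rw [prod_ite, filter_mem_eq_inter, univ_inter, filter_not, filter_mem_eq_inter, univ_inter,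
    compl_eq_univ_sdiff]

section BernoulliSubset

variable {ι : Type*} [Fintype ι] [DecidableEq ι]

-- the law of a random subset containing each element independently with probability `1 - q`
def bernoulliWeight (q : ℝ) (s : Finset ι) : ℝ := ∏ j, if j ∈ s then 1 - q else q

theorem sum_bernoulliWeight_inter_eq_empty (q : ℝ) (I : Finset ι) :
    ∑ s with s ∩ I = ∅, bernoulliWeight q s = q ^ #I := by
  -- weighting the elements of `I` by `0` kills exactly the subsets that meet `I`
  calc ∑ s with s ∩ I = ∅, bernoulliWeight q s
      = ∑ s : Finset ι, ∏ j, (if j ∈ s then (if j ∈ I then 0 else 1 - q) else q) := by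
        rw [sum_filter]
        refine Fintype.sum_congr _ _ fun s => ?_
        split_ifs with hs
        · refine prod_congr rfl fun j _ => ?_
          by_cases hjs : j ∈ s
          · have hjI : j ∉ I := fun hjI => by simpa [hs] using mem_inter.2 ⟨hjs, hjI⟩
            simp [hjs, hjI]
          · simp [hjs]
        · obtain ⟨j, hj⟩ := nonempty_iff_ne_empty.2 hs
          rw [mem_inter] at hj
          exact (prod_eq_zero (mem_univ j) (by simp [hj.1, hj.2])).symm
    _ = q ^ #I := by
        rw [Fintype.sum_prod_ite_mem]
        simp_rw [ite_add, zero_add, sub_add_cancel]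
        rw [Fintype.prod_ite_mem, prod_const]

theorem sum_bernoulliWeight (q : ℝ) : ∑ s : Finset ι, bernoulliWeight q s = 1 := by
  simpa using sum_bernoulliWeight_inter_eq_empty q (∅ : Finset ι)

theorem sum_bernoulliWeight_inter_ne_empty (q : ℝ) (I : Finset ι) :
    ∑ s with s ∩ I ≠ ∅, bernoulliWeight q s = 1 - q ^ #I := by
  rw [← sum_bernoulliWeight_inter_eq_empty, ← sum_bernoulliWeight (ι := ι) q,
    ← sum_filter_add_sum_filter_not univ (fun s : Finset ι => s ∩ I = ∅)]
  ring

theorem bernoulliWeight_nonneg {q : ℝ} (hq0 : 0 ≤ q) (hq1 : q ≤ 1) (s : Finset ι) :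
    0 ≤ bernoulliWeight q s :=
  Finset.prod_nonneg fun j _ => by split_ifs <;> linarith

theorem measure_le_ofReal_sum_bernoulliWeight {Ω : Type*} [MeasurableSpace Ω] (μ : Measure Ω)
    (f : Ω → Finset ι) {q : ℝ} (hq0 : 0 ≤ q) (hq1 : q ≤ 1)
    (hf : ∀ s, μ {ω | f ω = s} = ENNReal.ofReal (bernoulliWeight q s))
    (P : Finset ι → Prop) [DecidablePred P] :
    μ {ω | P (f ω)} ≤ ENNReal.ofReal (∑ s with P s, bernoulliWeight q s) := by
  calc μ {ω | P (f ω)} = μ (⋃ s ∈ Finset.univ.filter P, {ω | f ω = s}) := by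
        congr 1; ext ω; simp
    _ ≤ ∑ s with P s, μ {ω | f ω = s} := measure_biUnion_finset_le _ _
    _ = ENNReal.ofReal (∑ s with P s, bernoulliWeight q s) := by
        rw [ENNReal.ofReal_sum_of_nonneg fun s _ => bernoulliWeight_nonneg hq0 hq1 s]
        exact Finset.sum_congr rfl fun s _ => hf s

theorem measure_inter_eq_empty_le {Ω : Type*} [MeasurableSpace Ω] (μ : Measure Ω)
    (f : Ω → Finset ι) {Δ : ℝ} (hΔ : 0 < Δ)
    (hf : ∀ s, μ {ω | f ω = s} = ENNReal.ofReal (bernoulliWeight ((2 : ℝ) ^ (-(1 / Δ))) s))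
    (I : Finset ι) : μ {ω | f ω ∩ I = ∅} ≤ ENNReal.ofReal ((2 : ℝ) ^ (-(#I / Δ))) := by
  refine (measure_le_ofReal_sum_bernoulliWeight μ f (by positivity)
    (two_rpow_neg_one_div_le_one hΔ) hf (fun s => s ∩ I = ∅)).trans_eq ?_
  rw [sum_bernoulliWeight_inter_eq_empty, two_rpow_neg_one_div_pow]

theorem measure_inter_ne_empty_le {Ω : Type*} [MeasurableSpace Ω] (μ : Measure Ω)
    (f : Ω → Finset ι) {Δ : ℝ} (hΔ : 0 < Δ)
    (hf : ∀ s, μ {ω | f ω = s} = ENNReal.ofReal (bernoulliWeight ((2 : ℝ) ^ (-(1 / Δ))) s))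
    (I : Finset ι) : μ {ω | f ω ∩ I ≠ ∅} ≤ ENNReal.ofReal (#I / Δ) := by
  refine (measure_le_ofReal_sum_bernoulliWeight μ f (by positivity)
    (two_rpow_neg_one_div_le_one hΔ) hf (fun s => s ∩ I ≠ ∅)).trans (ENNReal.ofReal_le_ofReal ?_)
  rw [sum_bernoulliWeight_inter_ne_empty, two_rpow_neg_one_div_pow]
  exact one_sub_two_rpow_neg_le (by positivity)

theorem measure_inter_ne_empty_le_half {Ω : Type*} [MeasurableSpace Ω] (μ : Measure Ω)
    (f : Ω → Finset ι) (I : Finset ι) {Δ δ : ℝ} (hδ : 0 < δ) (hΔ : 2 * #I / δ < Δ)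
    (hf : ∀ s, μ {ω | f ω = s} = ENNReal.ofReal (bernoulliWeight ((2 : ℝ) ^ (-(1 / Δ))) s)) :
    μ {ω | f ω ∩ I ≠ ∅} ≤ ENNReal.ofReal (δ / 2) := by
  have hΔ0 : 0 < Δ := hΔ.trans_le' (by positivity)
  refine (measure_inter_ne_empty_le μ f hΔ0 hf I).trans (ENNReal.ofReal_le_ofReal ?_)
  rw [div_lt_iff₀ hδ] at hΔ
  rw [div_le_iff₀ hΔ0]
  nlinarith

end BernoulliSubset

theorem measure_biUnion_Icc_inter_eq_empty_le {ι Ω : Type*} [Fintype ι] [DecidableEq ι]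
    [MeasurableSpace Ω] (μ : Measure Ω) (Q : ℕ → Ω → Finset ι) {Δ : ℕ → ℝ}
    (hΔpos : ∀ i, 1 ≤ i → 0 < Δ i) (hΔ : ∀ i, 1 ≤ i → 2 * Δ i ≤ Δ (i + 1))
    (hQ : ∀ i, 1 ≤ i → ∀ s, μ {ω | Q i ω = s} =
      ENNReal.ofReal (bernoulliWeight ((2 : ℝ) ^ (-(1 / Δ i))) s))
    (I : Finset ι) {δ : ℝ} (hδ : 0 < δ) (hδ1 : δ ≤ 1) {k : ℕ}
    (hk : k ≠ 0 → 2 * Δ k * Real.logb 2 (2 / δ) < #I) :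
    μ (⋃ i ∈ Icc 1 k, {ω | Q i ω ∩ I = ∅}) ≤ ENNReal.ofReal (δ / 2) := by
  calc μ (⋃ i ∈ Icc 1 k, {ω | Q i ω ∩ I = ∅}) ≤ ∑ i ∈ Icc 1 k, μ {ω | Q i ω ∩ I = ∅} :=
        measure_biUnion_finset_le _ _
    _ ≤ ∑ i ∈ Icc 1 k, ENNReal.ofReal ((2 : ℝ) ^ (-(#I / Δ i))) := sum_le_sum fun i hi =>
        measure_inter_eq_empty_le μ (Q i) (hΔpos i (mem_Icc.1 hi).1) (hQ i (mem_Icc.1 hi).1) I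
    _ = ENNReal.ofReal (∑ i ∈ Icc 1 k, (2 : ℝ) ^ (-(#I / Δ i))) :=
        (ENNReal.ofReal_sum_of_nonneg fun i _ => by positivity).symm
    _ ≤ ENNReal.ofReal (δ / 2) := by
        refine ENNReal.ofReal_le_ofReal ?_
        rcases Nat.eq_zero_or_pos k with rfl | hk0
        · simp only [zero_lt_one, Icc_eq_empty_of_lt, sum_empty]; positivity
        · exact sum_Icc_two_rpow_neg_div_le hΔpos hΔ (Nat.cast_nonneg _) hδ hδ1 hk0 (hk hk0.ne')

theorem compl_setOf_window_subset {Ω : Type*} {A : ℕ → Ω → Prop} {N : Ω → ℕ}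
    (hN : ∀ ω, N ω = sInf {i | 1 ≤ i ∧ A i ω}) {c : ℕ → ℝ} (hc : MonotoneOn c (Set.Ici 1))
    (x : ℝ) {j : ℕ} (hj : 1 ≤ j) :
    {ω | x ≤ c (N ω) ∧ c (N ω) ≤ c j}ᶜ ⊆
      {ω | ¬ A j ω} ∪ ⋃ i ∈ Icc 1 (Nat.findGreatest (fun i => c i < x) j), {ω | A i ω} := by
  intro ω hω
  by_cases hA : A j ω
  · right
    have hNmem : 1 ≤ N ω ∧ A (N ω) ω := hN ω ▸ Nat.sInf_mem (s := {i | 1 ≤ i ∧ A i ω}) ⟨j, hj, hA⟩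
    have hNj : N ω ≤ j := hN ω ▸ Nat.sInf_le ⟨hj, hA⟩
    have hlow : c (N ω) < x := by
      by_contra! hx
      exact hω ⟨hx, hc hNmem.1 (Set.mem_Ici.2 hj) hNj⟩
    exact Set.mem_biUnion (mem_Icc.2 ⟨hNmem.1, Nat.le_findGreatest hNj hlow⟩) hNmem.2
  · exact Or.inl hA

section FirstIndex

variable {Ω : Type*} [MeasurableSpace Ω] {μ : Measure Ω}

theorem ofReal_one_sub_le_measure [IsProbabilityMeasure μ] {s : Set Ω} {δ : ℝ} (hδ : 0 ≤ δ)
    (hs : μ sᶜ ≤ ENNReal.ofReal δ) : ENNReal.ofReal (1 - δ) ≤ μ s := by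
  rw [ENNReal.ofReal_sub _ hδ, ENNReal.ofReal_one, tsub_le_iff_right]
  calc 1 = μ Set.univ := measure_univ.symm
    _ ≤ μ s + μ sᶜ := measure_univ_le_add_compl s
    _ ≤ μ s + ENNReal.ofReal δ := by gcongr

theorem lintegral_natCast_le_tsum_measure_lt (μ : Measure Ω) (N : Ω → ℕ) :
    ∫⁻ ω, (N ω : ℝ≥0∞) ∂μ ≤ ∑' m, μ {ω | m < N ω} := by
  -- `N` need not be measurable, so the indicators are taken of measurable hulls
  set T : ℕ → Set Ω := fun m => toMeasurable μ {ω | m < N ω}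
  have hpt : ∀ ω, (N ω : ℝ≥0∞) ≤ ∑' m, (T m).indicator 1 ω := fun ω =>
    calc (N ω : ℝ≥0∞) = ∑ m ∈ range (N ω), (T m).indicator 1 ω := by
          rw [sum_congr rfl fun m hm => Set.indicator_of_mem
            (subset_toMeasurable μ _ (mem_range.1 hm)) (1 : Ω → ℝ≥0∞)]
          simp
      _ ≤ ∑' m, (T m).indicator 1 ω := ENNReal.sum_le_tsum _
  calc ∫⁻ ω, (N ω : ℝ≥0∞) ∂μ ≤ ∫⁻ ω, ∑' m, (T m).indicator 1 ω ∂μ := lintegral_mono hpt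
    _ = ∑' m, μ {ω | m < N ω} := by
      rw [lintegral_tsum fun m => (measurable_one.indicator
        (measurableSet_toMeasurable μ _)).aemeasurable]
      refine tsum_congr fun m => ?_
      rw [lintegral_indicator_one (measurableSet_toMeasurable μ _), measure_toMeasurable]

variable {β : Type*} {mβ : MeasurableSpace β} {Q : ℕ → Ω → β} {p : β → Prop} {N : Ω → ℕ}

theorem measure_add_lt_sInf_le_pow (hindep : iIndepFun (m := fun _ => mβ) Q μ)
    (hp : MeasurableSet[mβ] {t | ¬ p t}) (hN : ∀ ω, N ω = sInf {i | 1 ≤ i ∧ p (Q i ω)})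
    {k : ℕ} (hk : 1 ≤ k) {r : ℝ≥0∞} (hr : ∀ i, k ≤ i → μ {ω | ¬ p (Q i ω)} ≤ r) (m : ℕ) :
    μ {ω | k + m < N ω} ≤ r ^ m := by
  have hsub : {ω | k + m < N ω} ⊆ ⋂ i ∈ Ico k (k + m), Q i ⁻¹' {t | ¬ p t} := by
    intro ω hω
    simp only [Set.mem_iInter, mem_Ico]
    intro i hi hpi
    have : N ω ≤ i := hN ω ▸ Nat.sInf_le ⟨hk.trans hi.1, hpi⟩
    exact absurd hω (by simp only [Set.mem_ofPred_eq]; omega)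
  calc μ {ω | k + m < N ω} ≤ μ (⋂ i ∈ Ico k (k + m), Q i ⁻¹' {t | ¬ p t}) := measure_mono hsub
    _ = ∏ i ∈ Ico k (k + m), μ (Q i ⁻¹' {t | ¬ p t}) :=
      hindep.meas_biInter fun i _ => ⟨_, hp, rfl⟩
    _ ≤ ∏ _i ∈ Ico k (k + m), r := prod_le_prod' fun i hi => hr i (mem_Ico.1 hi).1
    _ = r ^ m := by rw [prod_const, Nat.card_Ico, Nat.add_sub_cancel_left]

theorem lintegral_sInf_le_add_inv [IsProbabilityMeasure μ]
    (hindep : iIndepFun (m := fun _ => mβ) Q μ)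
    (hp : MeasurableSet[mβ] {t | ¬ p t}) (hN : ∀ ω, N ω = sInf {i | 1 ≤ i ∧ p (Q i ω)})
    {k : ℕ} (hk : 1 ≤ k) {r : ℝ≥0∞} (hr : ∀ i, k ≤ i → μ {ω | ¬ p (Q i ω)} ≤ r) :
    ∫⁻ ω, (N ω : ℝ≥0∞) ∂μ ≤ k + (1 - r)⁻¹ :=
  calc ∫⁻ ω, (N ω : ℝ≥0∞) ∂μ ≤ ∫⁻ ω, ((k : ℝ≥0∞) + ((N ω - k : ℕ) : ℝ≥0∞)) ∂μ :=
        lintegral_mono fun ω => by rw [← Nat.cast_add]; exact Nat.cast_le.2 (by omega)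
    _ = k + ∫⁻ ω, ((N ω - k : ℕ) : ℝ≥0∞) ∂μ := by
        rw [lintegral_add_left measurable_const, lintegral_const, measure_univ, mul_one]
    _ ≤ k + ∑' m, μ {ω | k + m < N ω} := by
        gcongr
        refine (lintegral_natCast_le_tsum_measure_lt μ _).trans_eq (tsum_congr fun m => ?_)
        congr 1; ext ω; simp only [Set.mem_ofPred_eq]; omega
    _ ≤ k + ∑' m, r ^ m := by gcongr with m; exact measure_add_lt_sInf_le_pow hindep hp hN hk hr m
    _ = k + (1 - r)⁻¹ := by rw [ENNReal.tsum_geometric]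

end FirstIndex

theorem stmt13_general {n : ℕ} (δ : ℝ) (hδ : 0 < δ) (hδ1 : δ < 1)
    (d : ℕ)
    (Δ : ℕ → ℝ) (hΔ1 : 1 ≤ Δ 1) (hΔ : ∀ i, 1 ≤ i → 2 * Δ i ≤ Δ (i + 1))
    {Ω : Type} [MeasurableSpace Ω] (μ : Measure Ω) [IsProbabilityMeasure μ]
    (Q : ℕ → Ω → Finset (Fin n))
    (hindep : iIndepFun (m := fun _ => (⊤ : MeasurableSpace (Finset (Fin n)))) Q μ)
    (hdist : ∀ i, 1 ≤ i → ∀ s : Finset (Fin n),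
      μ {ω | Q i ω = s} = ENNReal.ofReal (∏ j : Fin n,
        if j ∈ s then 1 - (2 : ℝ) ^ (-(1 / Δ i)) else (2 : ℝ) ^ (-(1 / Δ i))))
    (I : Finset (Fin n)) (hI : I.card = d)
    (i₀ : Ω → ℕ) (hi₀ : ∀ ω, i₀ ω = sInf {i | 1 ≤ i ∧ Q i ω ∩ I = ∅})
    (D : Ω → ℝ) (hD : ∀ ω, D ω = 2 * Δ (i₀ ω) * Real.logb 2 (2 / δ))
    (i₁ : ℕ) (hi₁1 : 1 ≤ i₁) (hi₁ : 2 * (d : ℝ) / δ < Δ i₁) :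
    ENNReal.ofReal (1 - δ) ≤
        μ {ω | (d : ℝ) ≤ D ω ∧ D ω ≤ 2 * Δ i₁ * Real.logb 2 (2 / δ)} ∧
      ∫⁻ ω, (i₀ ω : ENNReal) ∂μ ≤ (i₁ : ENNReal) + 2 := by
  subst hI
  obtain rfl : D = fun ω => 2 * Δ (i₀ ω) * Real.logb 2 (2 / δ) := funext hD
  set L := Real.logb 2 (2 / δ)
  have hL : 0 < L := Real.logb_pos one_lt_two (by rw [lt_div_iff₀ hδ]; linarith)
  have hΔpos : ∀ i, 1 ≤ i → 0 < Δ i := fun i hi =>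
    one_pos.trans_le (one_le_of_two_mul_le_succ hΔ1 hΔ hi)
  have hmono := monotoneOn_of_two_mul_le_succ hΔ1 hΔ
  have hmiss : ∀ i, i₁ ≤ i → μ {ω | Q i ω ∩ I ≠ ∅} ≤ ENNReal.ofReal (δ / 2) := fun i hi =>
    measure_inter_ne_empty_le_half μ (Q i) I hδ
      (hi₁.trans_le (hmono (Set.mem_Ici.2 hi₁1) (Set.mem_Ici.2 (hi₁1.trans hi)) hi))
      (hdist i (hi₁1.trans hi))
  refine ⟨ofReal_one_sub_le_measure hδ.le ?_, ?_⟩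
  · set k := Nat.findGreatest (fun i => 2 * Δ i * L < #I) i₁
    calc _ ≤ μ ({ω | Q i₁ ω ∩ I ≠ ∅} ∪ ⋃ i ∈ Icc 1 k, {ω | Q i ω ∩ I = ∅}) :=
          measure_mono (compl_setOf_window_subset hi₀
            (fun a ha b hb hab => mul_le_mul_of_nonneg_right (by linarith [hmono ha hb hab]) hL.le)
            _ hi₁1)
      _ ≤ ENNReal.ofReal (δ / 2) + ENNReal.ofReal (δ / 2) :=
          (measure_union_le _ _).trans (add_le_add (hmiss i₁ le_rfl)
            (measure_biUnion_Icc_inter_eq_empty_le μ Q hΔpos hΔ hdist I hδ hδ1.le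
              fun hk => Nat.findGreatest_of_ne_zero rfl hk))
      _ = ENNReal.ofReal δ := by
          rw [← ENNReal.ofReal_add (by positivity) (by positivity), add_halves]
  · calc _ ≤ (i₁ : ℝ≥0∞) + (1 - 2⁻¹)⁻¹ :=
          lintegral_sInf_le_add_inv (p := fun t => t ∩ I = ∅) hindep trivial hi₀ hi₁1 fun i hi =>
            (hmiss i hi).trans (by
              rw [← ENNReal.ofReal_ofNat, ← ENNReal.ofReal_inv_of_pos two_pos]
              exact ENNReal.ofReal_le_ofReal (by linarith))
      _ = (i₁ : ℝ≥0∞) + 2 := by rw [ENNReal.one_sub_inv_two, inv_inv]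

/-- For independent random subsets `Q_i ⊆ [n]` (each element included independently
with probability `1 − 2^{−1/Δ_i}`), with `Δ₁ ≥ 1` and `Δ_{i+1} ≥ 2Δ_i`, a fixed
`I ⊆ [n]` of size `d`, `i₀` the least index `i ≥ 1` with `Q_i ∩ I = ∅`, and
`D = 2·Δ_{i₀}·log₂(2/δ)`: if `i₁` is the least index with `Δ_{i₁} > 2d/δ`, then
`Pr[d ≤ D ≤ 2·Δ_{i₁}·log₂(2/δ)] ≥ 1 − δ` and `E[i₀] ≤ i₁ + 2`. -/
theorem stmt13 {n : ℕ} (δ : ℝ) (hδ : 0 < δ) (hδ1 : δ < 1)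
    (d : ℕ) (hd : 1 ≤ d) (hdn : d ≤ n)
    (Δ : ℕ → ℝ) (hΔ1 : 1 ≤ Δ 1) (hΔ : ∀ i, 1 ≤ i → 2 * Δ i ≤ Δ (i + 1))
    {Ω : Type} [MeasurableSpace Ω] (μ : Measure Ω) [IsProbabilityMeasure μ]
    (Q : ℕ → Ω → Finset (Fin n))
    (hindep : iIndepFun (m := fun _ => (⊤ : MeasurableSpace (Finset (Fin n)))) Q μ)
    (hdist : ∀ i, 1 ≤ i → ∀ s : Finset (Fin n),
      μ {ω | Q i ω = s} = ENNReal.ofReal (∏ j : Fin n,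
        if j ∈ s then 1 - (2 : ℝ) ^ (-(1 / Δ i)) else (2 : ℝ) ^ (-(1 / Δ i))))
    (I : Finset (Fin n)) (hI : I.card = d)
    (i₀ : Ω → ℕ) (hi₀ : ∀ ω, i₀ ω = sInf {i | 1 ≤ i ∧ Q i ω ∩ I = ∅})
    (D : Ω → ℝ) (hD : ∀ ω, D ω = 2 * Δ (i₀ ω) * Real.logb 2 (2 / δ))
    (i₁ : ℕ) (hi₁1 : 1 ≤ i₁) (hi₁ : 2 * (d : ℝ) / δ < Δ i₁)
    (hi₁min : ∀ i, 1 ≤ i → i < i₁ → Δ i ≤ 2 * (d : ℝ) / δ) :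
    ENNReal.ofReal (1 - δ) ≤
        μ {ω | (d : ℝ) ≤ D ω ∧ D ω ≤ 2 * Δ i₁ * Real.logb 2 (2 / δ)} ∧
      ∫⁻ ω, (i₀ ω : ENNReal) ∂μ ≤ (i₁ : ENNReal) + 2 :=
  stmt13_general δ hδ hδ1 d Δ hΔ1 hΔ μ Q hindep hdist I hI i₀ hi₀ D hD i₁ hi₁1 hi₁
end
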